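/- arXiv:math/0607063 — 4 statements merged into one kernel-verified Lean document; each statement's English description precedes it below -/
import Mathlib

section
/- Ahlfors' Schwarzian S₁φ of a C³ curve φ : (a,b) → ℝⁿ with φ'(x) ≠ 0 transforms under smooth reparametrization x = x(t) with x'(t) ≠ 0 by the chain rule S₁(φ∘x)(t) = S₁φ(x(t))·x'(t)² + Sx(t), where Sx is the classical (real) Schwarzian of x. -/
/-!
By the chain rule the first three derivatives of `φ ∘ x` are `x' φ'`, `x'² φ'' + x'' φ'` and
`x'³ φ''' + 3 x' x'' φ'' + x''' φ'` (with `φ` and its derivatives evaluated at `x t`).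
Substituting them into the pointwise formula for `S₁`, the terms `x'' ⟨φ'', φ'⟩ / |φ'|²` coming
from the three summands cancel (coefficients `3 - 6 + 3`), and what is left besides `S₁φ · x'²`
is `x'''/x' - (3/2)(x''/x')²`, which is the classical Schwarzian of `x`.
-/

open Set

/-- Ahlfors' Schwarzian derivative of a curve `φ : ℝ → ℝⁿ`:
`S₁φ = ⟨φ''',φ'⟩/|φ'|² - 3⟨φ'',φ'⟩²/|φ'|⁴ + (3/2)|φ''|²/|φ'|²`. -/
noncomputable def ahlforsS1 {n : ℕ} (φ : ℝ → EuclideanSpace ℝ (Fin n)) (x : ℝ) : ℝ :=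
  (inner ℝ (iteratedDeriv 3 φ x) (deriv φ x) : ℝ) / ‖deriv φ x‖^2
    - 3 * ((inner ℝ (iteratedDeriv 2 φ x) (deriv φ x) : ℝ))^2 / ‖deriv φ x‖^4
    + (3/2) * ‖iteratedDeriv 2 φ x‖^2 / ‖deriv φ x‖^2

/-- The classical real Schwarzian `Sx = (x''/x')' - (1/2)(x''/x')²`. -/
noncomputable def realSchwarzian (f : ℝ → ℝ) (t : ℝ) : ℝ :=
  deriv (fun s => deriv (deriv f) s / deriv f s) t
    - (1/2) * (deriv (deriv f) t / deriv f t)^2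

noncomputable def ahlforsForm {E : Type*} [NormedAddCommGroup E] [InnerProductSpace ℝ E]
    (p₁ p₂ p₃ : E) : ℝ :=
  inner ℝ p₃ p₁ / ‖p₁‖ ^ 2 - 3 * inner ℝ p₂ p₁ ^ 2 / ‖p₁‖ ^ 4 + 3 / 2 * ‖p₂‖ ^ 2 / ‖p₁‖ ^ 2

theorem ahlforsS1_eq_ahlforsForm {n : ℕ} (φ : ℝ → EuclideanSpace ℝ (Fin n)) (s : ℝ) :
    ahlforsS1 φ s = ahlforsForm (deriv φ s) (deriv (deriv φ) s) (deriv (deriv (deriv φ)) s) := by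
  simp [ahlforsS1, ahlforsForm, iteratedDeriv_eq_iterate]

theorem ahlforsForm_reparam {E : Type*} [NormedAddCommGroup E] [InnerProductSpace ℝ E]
    {p₁ p₂ p₃ : E} {v w z : ℝ} (hp : p₁ ≠ 0) (hv : v ≠ 0) :
    ahlforsForm (v • p₁) (v ^ 2 • p₂ + w • p₁) (v ^ 3 • p₃ + (3 * v * w) • p₂ + z • p₁)
      = ahlforsForm p₁ p₂ p₃ * v ^ 2 + (z / v - 3 / 2 * (w / v) ^ 2) := by
  have hp' : ‖p₁‖ ≠ 0 := norm_ne_zero_iff.mpr hp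
  simp only [ahlforsForm, norm_add_sq_real, norm_smul, inner_add_left, inner_smul_left,
    inner_smul_right, mul_pow, Real.norm_eq_abs, sq_abs, real_inner_self_eq_norm_sq,
    conj_trivial]
  rw [(by decide : Even 4).pow_abs]
  field_simp
  ring

theorem realSchwarzian_eq {x : ℝ → ℝ} {t : ℝ} (hx₁ : DifferentiableAt ℝ (deriv x) t)
    (hx₂ : DifferentiableAt ℝ (deriv (deriv x)) t) (hv : deriv x t ≠ 0) :
    realSchwarzian x t
      = deriv (deriv (deriv x)) t / deriv x t - 3 / 2 * (deriv (deriv x) t / deriv x t) ^ 2 := by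
  rw [realSchwarzian, (hx₂.hasDerivAt.fun_div hx₁.hasDerivAt hv).deriv]
  field_simp
  ring

section ChainRule

variable {F : Type*} [NormedAddCommGroup F] [NormedSpace ℝ F] {f : ℝ → F} {x : ℝ → ℝ}
  {U V : Set ℝ}

theorem hasDerivAt_smul_comp {g : ℝ → ℝ} {g' s : ℝ} (hg : HasDerivAt g g' s)
    (hf : DifferentiableAt ℝ f (x s)) (hx : DifferentiableAt ℝ x s) :
    HasDerivAt (fun r ↦ g r • f (x r)) (g s • deriv x s • deriv f (x s) + g' • f (x s)) s :=
  hg.smul (hf.hasDerivAt.scomp s hx.hasDerivAt)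

variable (hU : IsOpen U) (hV : IsOpen V) (hmaps : MapsTo x V U)
include hU hV hmaps

theorem deriv_comp_eqOn (hf : DifferentiableOn ℝ f U) (hx : DifferentiableOn ℝ x V) :
    EqOn (deriv (f ∘ x)) (fun s ↦ deriv x s • deriv f (x s)) V := fun s hs ↦
  deriv.scomp s (hf.differentiableAt (hU.mem_nhds (hmaps hs)))
    (hx.differentiableAt (hV.mem_nhds hs))

theorem deriv_deriv_comp_eqOn (hf : ContDiffOn ℝ 2 f U) (hx : ContDiffOn ℝ 2 x V) :
    EqOn (deriv (deriv (f ∘ x)))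
      (fun s ↦ deriv x s ^ 2 • deriv (deriv f) (x s) + deriv (deriv x) s • deriv f (x s)) V := by
  intro s hs
  have hf₁ := (hf.deriv_of_isOpen hU (m := 1) (by norm_num)).differentiableOn one_ne_zero
  have hx₁ := (hx.deriv_of_isOpen hV (m := 1) (by norm_num)).differentiableOn one_ne_zero
  have hx₀ := hx.differentiableOn two_ne_zero
  rw [((deriv_comp_eqOn hU hV hmaps (hf.differentiableOn two_ne_zero) hx₀).eventuallyEq_of_mem
      (hV.mem_nhds hs)).deriv_eq,
    (hasDerivAt_smul_comp (hx₁.differentiableAt (hV.mem_nhds hs)).hasDerivAt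
      (hf₁.differentiableAt (hU.mem_nhds (hmaps hs))) (hx₀.differentiableAt (hV.mem_nhds hs))).deriv]
  module

theorem deriv_deriv_deriv_comp_eqOn (hf : ContDiffOn ℝ 3 f U) (hx : ContDiffOn ℝ 3 x V) :
    EqOn (deriv (deriv (deriv (f ∘ x))))
      (fun s ↦ deriv x s ^ 3 • deriv (deriv (deriv f)) (x s)
        + (3 * deriv x s * deriv (deriv x) s) • deriv (deriv f) (x s)
        + deriv (deriv (deriv x)) s • deriv f (x s)) V := by
  intro s hs
  have hsV := hV.mem_nhds hs
  have hsU := hU.mem_nhds (hmaps hs)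
  have hf₁ := hf.deriv_of_isOpen hU (m := 2) (by norm_num)
  have hx₁ := hx.deriv_of_isOpen hV (m := 2) (by norm_num)
  have hf₂ := (hf₁.deriv_of_isOpen hU (m := 1) (by norm_num)).differentiableOn one_ne_zero
  have hx₂ := (hx₁.deriv_of_isOpen hV (m := 1) (by norm_num)).differentiableOn one_ne_zero
  have hx₀ := (hx.differentiableOn three_ne_zero).differentiableAt hsV
  have hx₁' := (hx₁.differentiableOn two_ne_zero).differentiableAt hsV
  rw [((deriv_deriv_comp_eqOn hU hV hmaps (hf.of_le (by norm_num)) (hx.of_le (by norm_num))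
      ).eventuallyEq_of_mem hsV).deriv_eq,
    ((hasDerivAt_smul_comp (hx₁'.hasDerivAt.fun_pow 2) (hf₂.differentiableAt hsU) hx₀).fun_add
      (hasDerivAt_smul_comp (hx₂.differentiableAt hsV).hasDerivAt
        ((hf₁.differentiableOn two_ne_zero).differentiableAt hsU) hx₀)).deriv]
  module

end ChainRule

/-- Ahlfors' Schwarzian transforms under reparametrization by the chain rule
`S₁(φ∘x)(t) = S₁φ(x(t))·x'(t)² + Sx(t)`. -/
theorem ahlforsS1_comp {n : ℕ} (a b c d : ℝ)
    (φ : ℝ → EuclideanSpace ℝ (Fin n)) (x : ℝ → ℝ)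
    (hφ : ContDiffOn ℝ 3 φ (Ioo a b)) (hφ' : ∀ s ∈ Ioo a b, deriv φ s ≠ 0)
    (hx : ContDiffOn ℝ 3 x (Ioo c d)) (hx' : ∀ t ∈ Ioo c d, deriv x t ≠ 0)
    (hmaps : MapsTo x (Ioo c d) (Ioo a b)) :
    ∀ t ∈ Ioo c d,
      ahlforsS1 (φ ∘ x) t = ahlforsS1 φ (x t) * (deriv x t)^2 + realSchwarzian x t := by
  intro t ht
  have ht' := isOpen_Ioo.mem_nhds ht
  have hx₁ := hx.deriv_of_isOpen isOpen_Ioo (m := 2) (by norm_num)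
  have hx₂ := hx₁.deriv_of_isOpen isOpen_Ioo (m := 1) (by norm_num)
  rw [ahlforsS1_eq_ahlforsForm, ahlforsS1_eq_ahlforsForm,
    deriv_comp_eqOn isOpen_Ioo isOpen_Ioo hmaps (hφ.differentiableOn three_ne_zero)
      (hx.differentiableOn three_ne_zero) ht,
    deriv_deriv_comp_eqOn isOpen_Ioo isOpen_Ioo hmaps (hφ.of_le (by norm_num))
      (hx.of_le (by norm_num)) ht,
    deriv_deriv_deriv_comp_eqOn isOpen_Ioo isOpen_Ioo hmaps hφ hx ht,
    ahlforsForm_reparam (hφ' _ (hmaps ht)) (hx' t ht),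
    realSchwarzian_eq ((hx₁.differentiableOn two_ne_zero).differentiableAt ht')
      ((hx₂.differentiableOn one_ne_zero).differentiableAt ht') (hx' t ht)]
end

section
/- For a C³ curve φ : (a,b) → ℝⁿ with φ'(x) ≠ 0, Ahlfors' Schwarzian satisfies S₁φ = S(s) + (1/2)v²κ², where v = |φ'|, s(x) = ∫ v is the arclength function, S(s) = (v'/v)' - (1/2)(v'/v)² is the real Schwarzian of s, and κ is the curvature of the curve. -/
open Set

/-! Writing `v = ‖φ'‖`, one has `v' = ⟪φ'', φ'⟫ / v`, so the logarithmic derivative of the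
speed is `v' / v = ⟪φ'', φ'⟫ / v²`. Differentiating once more expresses `S(s)` through
`⟪φ''', φ'⟫`, `‖φ''‖²` and `⟪φ'', φ'⟫`, and the identity becomes a rational identity in these
quantities. -/

open Filter Topology

open scoped RealInnerProductSpace

section

variable {E : Type*} [NormedAddCommGroup E] [InnerProductSpace ℝ E] {γ : ℝ → E} {x : ℝ}

theorem HasDerivAt.norm_of_ne_zero {γ' : E} (hγ : HasDerivAt γ γ' x) (hx : γ x ≠ 0) :
    HasDerivAt (‖γ ·‖) (⟪γ', γ x⟫ / ‖γ x‖) x := by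
  have h := hγ.norm_sq.sqrt (by positivity)
  simp only [Real.sqrt_sq (norm_nonneg _)] at h
  convert h using 1
  rw [real_inner_comm]
  field_simp

theorem deriv_norm_div_norm_eventuallyEq (hγ : ∀ᶠ y in 𝓝 x, DifferentiableAt ℝ γ y)
    (hx : γ x ≠ 0) :
    (fun y => deriv (‖γ ·‖) y / ‖γ y‖) =ᶠ[𝓝 x]
      fun y => ⟪deriv γ y, γ y⟫ / ‖γ y‖ ^ 2 := by
  filter_upwards [hγ, hγ.self_of_nhds.continuousAt.eventually_ne hx] with y hy hy0
  rw [(hy.hasDerivAt.norm_of_ne_zero hy0).deriv, div_div, sq]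

theorem deriv_deriv_norm_div_norm (hγ : ∀ᶠ y in 𝓝 x, DifferentiableAt ℝ γ y)
    (hγ' : DifferentiableAt ℝ (deriv γ) x) (hx : γ x ≠ 0) :
    deriv (fun y => deriv (‖γ ·‖) y / ‖γ y‖) x =
      (‖deriv γ x‖ ^ 2 + ⟪deriv (deriv γ) x, γ x⟫) / ‖γ x‖ ^ 2
        - 2 * ⟪deriv γ x, γ x⟫ ^ 2 / ‖γ x‖ ^ 4 := by
  have hγx := hγ.self_of_nhds.hasDerivAt
  have h := (hγ'.hasDerivAt.inner ℝ hγx).fun_div hγx.norm_sq (by positivity)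
  rw [(deriv_norm_div_norm_eventuallyEq hγ hx).deriv_eq, h.deriv, real_inner_self_eq_norm_sq,
    real_inner_comm (deriv γ x) (γ x)]
  have hγx0 : ‖γ x‖ ≠ 0 := norm_ne_zero_iff.mpr hx
  field_simp

end

/-- `S₁φ = S(s) + (1/2)v²κ²` where `v = |φ'|`, `S(s) = (v'/v)' - (1/2)(v'/v)²`
is the Schwarzian of the arclength function, and `κ` is the curvature,
`κ² = (|φ''|²|φ'|² - ⟨φ'',φ'⟩²)/|φ'|⁶`. -/
theorem ahlforsS1_eq_schwarzian_arclength_add_curvature {n : ℕ} (a b : ℝ)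
    (φ : ℝ → EuclideanSpace ℝ (Fin n))
    (hφ : ContDiffOn ℝ 3 φ (Ioo a b)) (hφ' : ∀ s ∈ Ioo a b, deriv φ s ≠ 0) :
    ∀ x ∈ Ioo a b,
      ahlforsS1 φ x =
        (deriv (fun y => deriv (fun s => ‖deriv φ s‖) y / ‖deriv φ y‖) x
            - (1/2) * (deriv (fun s => ‖deriv φ s‖) x / ‖deriv φ x‖)^2)
        + (1/2) * ‖deriv φ x‖^2 *
          ((‖iteratedDeriv 2 φ x‖^2 * ‖deriv φ x‖^2
              - (inner ℝ (iteratedDeriv 2 φ x) (deriv φ x) : ℝ)^2) / ‖deriv φ x‖^6) := by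
  intro x hx
  have hU : Ioo a b ∈ 𝓝 x := Ioo_mem_nhds hx.1 hx.2
  have hφ'_smooth : ContDiffOn ℝ 2 (deriv φ) (Ioo a b) :=
    hφ.deriv_of_isOpen isOpen_Ioo (by norm_num)
  have hφ''_smooth : ContDiffOn ℝ 1 (deriv (deriv φ)) (Ioo a b) :=
    hφ'_smooth.deriv_of_isOpen isOpen_Ioo (by norm_num)
  have hφ'_diff : ∀ᶠ y in 𝓝 x, DifferentiableAt ℝ (deriv φ) y :=
    (hφ'_smooth.differentiableOn (by norm_num)).eventually_differentiableAt hU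
  have hφ''_diff : DifferentiableAt ℝ (deriv (deriv φ)) x :=
    (hφ''_smooth.differentiableOn one_ne_zero).differentiableAt hU
  have hx0 := hφ' x hx
  have hv : ‖deriv φ x‖ ≠ 0 := norm_ne_zero_iff.mpr hx0
  rw [ahlforsS1, iteratedDeriv_succ, iteratedDeriv_succ, iteratedDeriv_one,
    deriv_deriv_norm_div_norm hφ'_diff hφ''_diff hx0,
    (hφ'_diff.self_of_nhds.hasDerivAt.norm_of_ne_zero hx0).deriv]
  field_simp
  ring
end

section
/- Let p : [0,1) → (0,∞) be continuous with (1-x²)²p(x) nonincreasing on [0,1), extended to (-1,1) as an even function, and let T(z) = (iρ-z)/(1+iρz) with ρ ∈ (-1,1). Then for all x ∈ (-1,1): |T'(x)|²·p(|T(x)|) ≤ p(|x|). -/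
/-!
The disk automorphism `T` is a hyperbolic isometry, so on the real diameter
`|T'(x)| = (1 - |T x|²) / (1 - x²)`; moreover `|x| ≤ |T x|`. Hence
`|T'(x)|² p(|T x|) = (1 - |T x|²)² p(|T x|) / (1 - |x|²)²`, and the monotonicity of
`(1 - r²)² p(r)` between `|x|` and `|T x|` bounds this by `p |x|`.
-/

open Set Complex

noncomputable section

def mobius (c w : ℂ) : ℂ := (c - w) / (1 + c * w)

theorem hasDerivAt_mobius {c w : ℂ} (hw : 1 + c * w ≠ 0) :
    HasDerivAt (mobius c) (-(1 + c ^ 2) / (1 + c * w) ^ 2) w := by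
  have hnum : HasDerivAt (fun w : ℂ => c - w) (-1) w := by
    simpa using (hasDerivAt_id w).const_sub c
  have hden : HasDerivAt (fun w : ℂ => 1 + c * w) c w := by
    simpa using ((hasDerivAt_id w).const_mul c).const_add 1
  exact (hnum.div hden hw).congr_deriv (by ring)

section RealDiameter

variable (ρ x : ℝ)

theorem normSq_one_add_I_mul_mul : normSq (1 + I * ρ * x) = 1 + ρ ^ 2 * x ^ 2 := by
  simp only [normSq_apply, add_re, one_re, mul_re, I_re, ofReal_re, zero_mul, I_im, ofReal_im,
    mul_zero, sub_self, mul_im, one_mul, zero_add, add_zero, mul_one, add_im, one_im]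
  ring

theorem one_add_I_mul_mul_ne_zero : 1 + I * ρ * x ≠ 0 := by
  rw [← normSq_pos, normSq_one_add_I_mul_mul]
  positivity

theorem sq_norm_mobius_I_mul :
    ‖mobius (I * ρ) x‖ ^ 2 = (x ^ 2 + ρ ^ 2) / (1 + ρ ^ 2 * x ^ 2) := by
  rw [mobius, Complex.sq_norm, normSq_div, normSq_one_add_I_mul_mul]
  congr 1
  simp only [normSq_apply, sub_re, mul_re, I_re, ofReal_re, zero_mul, I_im, ofReal_im, mul_zero,
    sub_self, zero_sub, mul_neg, neg_mul, neg_neg, sub_im, mul_im, one_mul, zero_add, sub_zero]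
  ring

theorem one_sub_sq_norm_mobius_I_mul :
    1 - ‖mobius (I * ρ) x‖ ^ 2 = (1 - ρ ^ 2) * (1 - x ^ 2) / (1 + ρ ^ 2 * x ^ 2) := by
  rw [sq_norm_mobius_I_mul]
  field_simp
  ring

theorem norm_deriv_mobius_I_mul (hρ : ρ ^ 2 ≤ 1) :
    ‖deriv (mobius (I * ρ)) x‖ = (1 - ρ ^ 2) / (1 + ρ ^ 2 * x ^ 2) := by
  have hc : 1 + (I * ρ) ^ 2 = ((1 - ρ ^ 2 : ℝ) : ℂ) := by
    push_cast
    linear_combination (ρ : ℂ) ^ 2 * I_sq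
  rw [(hasDerivAt_mobius (one_add_I_mul_mul_ne_zero ρ x)).deriv, norm_div, norm_neg, norm_pow,
    hc, norm_real, Real.norm_of_nonneg (by linarith), Complex.sq_norm, normSq_one_add_I_mul_mul]

theorem norm_deriv_mobius_I_mul_eq (hρ : ρ ^ 2 ≤ 1) (hx : x ^ 2 ≠ 1) :
    ‖deriv (mobius (I * ρ)) x‖ = (1 - ‖mobius (I * ρ) x‖ ^ 2) / (1 - x ^ 2) := by
  have hx' : 1 - x ^ 2 ≠ 0 := sub_ne_zero.mpr (Ne.symm hx)
  rw [norm_deriv_mobius_I_mul ρ x hρ, one_sub_sq_norm_mobius_I_mul, mul_div_right_comm,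
    mul_div_cancel_right₀ _ hx']

theorem abs_le_norm_mobius_I_mul (hx : x ^ 2 ≤ 1) : |x| ≤ ‖mobius (I * ρ) x‖ := by
  have hρx : 0 ≤ ρ ^ 2 * ((1 - x ^ 2) * (1 + x ^ 2)) :=
    mul_nonneg (sq_nonneg ρ) (mul_nonneg (by linarith) (by positivity))
  have h : x ^ 2 ≤ ‖mobius (I * ρ) x‖ ^ 2 := by
    rw [sq_norm_mobius_I_mul, le_div_iff₀ (by positivity)]
    linarith
  simpa only [abs_norm] using sq_le_sq.mp h

theorem norm_mobius_I_mul_lt_one (hρ : ρ ^ 2 < 1) (hx : x ^ 2 < 1) :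
    ‖mobius (I * ρ) x‖ < 1 := by
  have h : 0 < 1 - ‖mobius (I * ρ) x‖ ^ 2 := by
    rw [one_sub_sq_norm_mobius_I_mul]
    have : 0 < 1 - ρ ^ 2 := by linarith
    have : 0 < 1 - x ^ 2 := by linarith
    positivity
  nlinarith [norm_nonneg (mobius (I * ρ) x)]

end RealDiameter

theorem mul_sq_div_le_of_antitoneOn {p : ℝ → ℝ}
    (hmono : AntitoneOn (fun r => (1 - r ^ 2) ^ 2 * p r) (Ico 0 1))
    {a b : ℝ} (ha : 0 ≤ a) (hab : a ≤ b) (hb : b < 1) :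
    ((1 - b ^ 2) / (1 - a ^ 2)) ^ 2 * p b ≤ p a := by
  have ha1 : 0 < 1 - a ^ 2 := by nlinarith
  rw [div_pow, div_mul_eq_mul_div, div_le_iff₀ (by positivity), mul_comm (p a)]
  exact hmono ⟨ha, by linarith⟩ ⟨ha.trans hab, hb⟩ hab

end

theorem nehari_weight_inequality_general (p : ℝ → ℝ) (ρ : ℝ) (hρ : ρ ∈ Ioo (-1:ℝ) 1)
    (hmono : AntitoneOn (fun x => (1 - x^2)^2 * p x) (Ico (0:ℝ) 1)) :
    ∀ x ∈ Ioo (-1:ℝ) 1,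
      (‖
          (deriv (fun w : ℂ => (Complex.I * ρ - w) / (1 + Complex.I * ρ * w)) x)‖)^2 *
        p (‖(Complex.I * ρ - (x:ℂ)) / (1 + Complex.I * ρ * x)‖)
      ≤ p |x| := by
  rintro x ⟨hx₁, hx₂⟩
  have hρ₂ : ρ ^ 2 < 1 := (sq_lt_one_iff_abs_lt_one ρ).mpr (abs_lt.mpr hρ)
  have hx : x ^ 2 < 1 := (sq_lt_one_iff_abs_lt_one x).mpr (abs_lt.mpr ⟨hx₁, hx₂⟩)
  change ‖deriv (mobius (I * ρ)) x‖ ^ 2 * p ‖mobius (I * ρ) x‖ ≤ p |x|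
  rw [norm_deriv_mobius_I_mul_eq ρ x hρ₂.le hx.ne, ← sq_abs x]
  exact mul_sq_div_le_of_antitoneOn hmono (abs_nonneg x)
    (abs_le_norm_mobius_I_mul ρ x hx.le) (norm_mobius_I_mul_lt_one ρ x hρ₂ hx)

/-- If `(1-x²)²p(x)` is nonincreasing on `[0,1)` with `p` positive and
continuous, then for the disk automorphism `T(z) = (iρ-z)/(1+iρz)` one has
`|T'(x)|² p(|T(x)|) ≤ p(|x|)` for all `x ∈ (-1,1)`. -/
theorem nehari_weight_inequality (p : ℝ → ℝ) (ρ : ℝ) (hρ : ρ ∈ Ioo (-1:ℝ) 1)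
    (hp : ContinuousOn p (Ico 0 1)) (hppos : ∀ x ∈ Ico (0:ℝ) 1, 0 < p x)
    (hmono : AntitoneOn (fun x => (1 - x^2)^2 * p x) (Ico (0:ℝ) 1)) :
    ∀ x ∈ Ioo (-1:ℝ) 1,
      (‖
          (deriv (fun w : ℂ => (Complex.I * ρ - w) / (1 + Complex.I * ρ * w)) x)‖)^2 *
        p (‖(Complex.I * ρ - (x:ℂ)) / (1 + Complex.I * ρ * x)‖)
      ≤ p |x| :=
  nehari_weight_inequality_general p ρ hρ hmono
end

section
/- Let c > (1+√2)·e^π. For the harmonic mapping f(z) = c·e^{πz} + (1/c)·e^{-π·conj(z)} on the unit disk, with Sf(z) = -π²/2 + 4π⁴e^{-2σ(z)} and e^{2σ(z)}|K(z)| = 4π⁴e^{-2σ(z)} where e^{σ(z)} = π(c·e^{πx} + (1/c)e^{-πx}), z = x+iy, one has |Sf(z)| + e^{2σ(z)}|K(z)| = π²/2 for all z in the unit disk. -/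
open Metric Real

/- Writing `u = c e^{πx}`, the hypothesis on `c` and `x > -1` give `u > 1 + √2`, hence
`s = u + u⁻¹ > 2√2`, i.e. `s² > 8`. Since `e^{-2σ} = (π s)⁻²`, the term `b = 4π⁴e^{-2σ} = 4π²/s²`
is at most `π²/2`, so `|-π²/2 + b| + b = (π²/2 - b) + b = π²/2`. -/

lemma abs_neg_add_add_of_le {α : Type*} [AddCommGroup α] [LinearOrder α] [IsOrderedAddMonoid α]
    {a b : α} (h : b ≤ a) : |-a + b| + b = a := by
  rw [abs_of_nonpos (neg_add_nonpos_iff.2 h)]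
  abel

lemma Real.exp_neg_two_mul_log {t : ℝ} (ht : t ≠ 0) : exp (-2 * log t) = (t ^ 2)⁻¹ := by
  rw [neg_mul, exp_neg, ← Nat.cast_ofNat, ← Real.log_pow, exp_log (pow_two_pos_of_ne_zero ht)]

lemma two_mul_sqrt_two_lt_add_inv {u : ℝ} (hu : 1 + √2 < u) : 2 * √2 < u + u⁻¹ := by
  have hsq : √2 ^ 2 = 2 := sq_sqrt zero_le_two
  have hu0 : 0 < u := by linarith [sqrt_nonneg 2]
  -- `1 + √2` and `√2 - 1 = (1 + √2)⁻¹` are the roots of `u² - 2√2 u + 1`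
  have hroot : 0 < (u - (1 + √2)) * (u - (√2 - 1)) := by
    apply mul_pos <;> linarith
  rw [← sub_pos, show u + u⁻¹ - 2 * √2 = (u - (1 + √2)) * (u - (√2 - 1)) / u by
    field_simp; linear_combination -hsq]
  positivity

lemma one_add_sqrt_two_lt_mul_exp {c x : ℝ} (hc : (1 + √2) * exp π < c) (hx : -1 ≤ x) :
    1 + √2 < c * exp (π * x) := by
  have hexp : 1 ≤ exp π * exp (π * x) := by
    rw [← exp_add]
    exact one_le_exp (by nlinarith [pi_pos])
  calc 1 + √2 ≤ (1 + √2) * exp π * exp (π * x) := by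
        rw [mul_assoc]; exact le_mul_of_one_le_right (by positivity) hexp
    _ < c * exp (π * x) := by gcongr

lemma four_mul_pi_pow_four_mul_exp_le {u : ℝ} (hu : 1 + √2 < u) :
    4 * π ^ 4 * exp (-2 * log (π * (u + u⁻¹))) ≤ π ^ 2 / 2 := by
  have hs := two_mul_sqrt_two_lt_add_inv hu
  have hs0 : 0 < u + u⁻¹ := lt_trans (by positivity) hs
  have hs8 : 8 ≤ (u + u⁻¹) ^ 2 := by
    nlinarith [sq_sqrt (zero_le_two : (0 : ℝ) ≤ 2), sqrt_nonneg 2]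
  rw [exp_neg_two_mul_log (by positivity), ← div_eq_mul_inv, div_le_div_iff₀ (by positivity)
    two_pos]
  nlinarith [pow_pos pi_pos 4]

/-- For `c > (1+√2)e^π` and `f(z) = c e^{πz} + (1/c) e^{-π z̄}` on the unit
disk, with `Sf = -π²/2 + 4π⁴ e^{-2σ}` and `e^{2σ}|K| = 4π⁴ e^{-2σ}` where
`e^{σ} = π(c e^{πx} + (1/c) e^{-πx})`, one has
`|Sf| + e^{2σ}|K| = π²/2` identically on the disk. -/
theorem catenoid_extremal_equality (c : ℝ)
    (hc : c > (1 + Real.sqrt 2) * Real.exp Real.pi) :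
    ∀ z ∈ ball (0:ℂ) 1,
      |(-Real.pi^2 / 2
          + 4 * Real.pi^4 *
            Real.exp (-2 * Real.log (Real.pi *
              (c * Real.exp (Real.pi * z.re) + (1/c) * Real.exp (-Real.pi * z.re)))))|
        + 4 * Real.pi^4 *
            Real.exp (-2 * Real.log (Real.pi *
              (c * Real.exp (Real.pi * z.re) + (1/c) * Real.exp (-Real.pi * z.re))))
      = Real.pi^2 / 2 := by
  intro z hz
  have hre : -1 ≤ z.re := by
    have := (Complex.abs_re_le_norm z).trans (mem_ball_zero_iff.1 hz).le
    linarith [neg_abs_le z.re]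
  have hinv : 1 / c * exp (-π * z.re) = (c * exp (π * z.re))⁻¹ := by
    rw [mul_inv, neg_mul, exp_neg, one_div]
  rw [hinv, neg_div]
  exact abs_neg_add_add_of_le
    (four_mul_pi_pow_four_mul_exp_le (one_add_sqrt_two_lt_mul_exp hc hre))
end
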